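/- arXiv:1901.07445 — 3 statements merged into one kernel-verified Lean document; each statement's English description precedes it below -/
import Mathlib

section
/- Let $0 < \mu < L$, set $\alpha = 4/(\sqrt{\mu}+\sqrt{L})^2$ and $\beta = ((\sqrt{L/\mu}-1)/(\sqrt{L/\mu}+1))^2$. For any $\lambda$ with $\mu < \lambda < L$, the discriminant $(1+\beta-\alpha\lambda)^2 - 4\beta$ is strictly negative, so the matrix $T = \begin{pmatrix} 1+\beta-\alpha\lambda & -\beta \\ 1 & 0\end{pmatrix}$ has two complex conjugate (non-real) eigenvalues, each of modulus exactly $\sqrt{\beta} = (\sqrt{L}-\sqrt{\mu})/(\sqrt{L}+\sqrt{\mu})$. -/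
/-!
Write `s = √μ`, `t = √L`, so that `√β = (t - s)/(t + s)` and `α = 4/(s + t)²`. Then the
discriminant factors as `(1 + β - αλ)² - 4β = 16 (μ - λ)(L - λ)/(√μ + √L)⁴`, which is negative
exactly for `μ < λ < L`. A monic real quadratic with negative discriminant has non-real roots
`z, z̄`, and their product `|z|²` is the constant term `β`.
-/

namespace Complex

variable {b c : ℝ} {z : ℂ}

lemma re_im_of_sq_sub_mul_add_eq_zero (hz : z ^ 2 - b * z + c = 0) :
    z.re ^ 2 - z.im ^ 2 - b * z.re + c = 0 ∧ (2 * z.re - b) * z.im = 0 := by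
  have hre := congrArg re hz
  have him := congrArg im hz
  simp only [pow_two, sub_re, add_re, mul_re, sub_im, add_im, mul_im, ofReal_re, ofReal_im,
    zero_re, zero_im] at hre him
  exact ⟨by linear_combination hre, by linear_combination him⟩

lemma im_ne_zero_of_sq_sub_mul_add_eq_zero (hd : b ^ 2 - 4 * c < 0)
    (hz : z ^ 2 - b * z + c = 0) : z.im ≠ 0 := by
  intro him
  have hre := (re_im_of_sq_sub_mul_add_eq_zero hz).1
  rw [him] at hre
  nlinarith [sq_nonneg (2 * z.re - b)]

lemma norm_eq_sqrt_of_sq_sub_mul_add_eq_zero (hd : b ^ 2 - 4 * c < 0)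
    (hz : z ^ 2 - b * z + c = 0) : ‖z‖ = √c := by
  obtain ⟨hre, him⟩ := re_im_of_sq_sub_mul_add_eq_zero hz
  have htrace : 2 * z.re = b := by
    linarith [(mul_eq_zero.1 him).resolve_right (im_ne_zero_of_sq_sub_mul_add_eq_zero hd hz)]
  rw [norm_def, normSq_apply]
  congr 1
  linear_combination -hre + z.re * htrace

end Complex

lemma heavyBall_discriminant_eq (s t lam : ℝ) (h : s + t ≠ 0) :
    (1 + ((t - s) / (t + s)) ^ 2 - 4 / (s + t) ^ 2 * lam) ^ 2 - 4 * ((t - s) / (t + s)) ^ 2 =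
      16 * (s ^ 2 - lam) * (t ^ 2 - lam) / (s + t) ^ 4 := by
  rw [add_comm t s]
  field_simp
  ring

lemma sqrt_div_sub_one_div_add_one {μ : ℝ} (L : ℝ) (hμ : 0 < μ) :
    (√(L / μ) - 1) / (√(L / μ) + 1) = (√L - √μ) / (√L + √μ) := by
  have hs : √μ ≠ 0 := (Real.sqrt_pos.2 hμ).ne'
  rw [Real.sqrt_div' L hμ.le, div_sub_one hs, div_add_one hs, div_div_div_cancel_right₀ hs]

/-- With the Polyak heavy-ball parameters `α = 4/(√μ+√L)²`,
`β = ((√(L/μ)-1)/(√(L/μ)+1))²` and `μ < λ < L`, the discriminant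
`(1+β-αλ)² - 4β` is negative, `√β = (√L-√μ)/(√L+√μ)`, and every (complex)
eigenvalue of `T = [[1+β-αλ, -β],[1,0]]`, i.e. every root of
`x² - (1+β-αλ)x + β`, is non-real with modulus `√β`. -/
theorem stmt2 (μ L α β lam : ℝ) (hμ : 0 < μ) (hL : μ < L)
    (hα : α = 4 / (Real.sqrt μ + Real.sqrt L) ^ 2)
    (hβ : β = ((Real.sqrt (L / μ) - 1) / (Real.sqrt (L / μ) + 1)) ^ 2)
    (h1 : μ < lam) (h2 : lam < L) :
    (1 + β - α * lam) ^ 2 - 4 * β < 0 ∧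
    Real.sqrt β = (Real.sqrt L - Real.sqrt μ) / (Real.sqrt L + Real.sqrt μ) ∧
    ∀ z : ℂ, z ^ 2 - ((1 + β - α * lam : ℝ) : ℂ) * z + ((β : ℝ) : ℂ) = 0 →
      z.im ≠ 0 ∧ ‖z‖ = Real.sqrt β := by
  rw [sqrt_div_sub_one_div_add_one L hμ] at hβ
  have hs : 0 < √μ := Real.sqrt_pos.2 hμ
  have hst : √μ < √L := Real.sqrt_lt_sqrt hμ.le hL
  have hdisc : (1 + β - α * lam) ^ 2 - 4 * β < 0 := by
    rw [hα, hβ, heavyBall_discriminant_eq _ _ _ (by positivity), Real.sq_sqrt hμ.le,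
      Real.sq_sqrt (hμ.trans hL).le]
    exact div_neg_of_neg_of_pos
      (mul_neg_of_neg_of_pos (mul_neg_of_pos_of_neg (by norm_num) (by linarith)) (by linarith))
      (by positivity)
  refine ⟨hdisc, ?_, fun z hz =>
    ⟨Complex.im_ne_zero_of_sq_sub_mul_add_eq_zero hdisc hz,
      Complex.norm_eq_sqrt_of_sq_sub_mul_add_eq_zero hdisc hz⟩⟩
  rw [hβ, Real.sqrt_sq (div_nonneg (by linarith) (by positivity))]
end

section
/- Let $\kappa > 1$, $L = \kappa\mu$ with $\mu > 0$, $\alpha = 4/(3L+\mu)$, and $\beta = (\sqrt{3\kappa+1}-2)/(\sqrt{3\kappa+1}+2)$ (assume $3\kappa+1 > 4$). For $\lambda \in [\mu, L]$ define $\Delta(\lambda) = (1+\beta)^2(1-\alpha\lambda)^2 - 4\beta(1-\alpha\lambda)$. Then $\Delta(\lambda) = \frac{16(1-\alpha\lambda)}{(\sqrt{3\kappa+1}+2)^2}\left(1 - \frac{\lambda}{\mu}\right)$; in particular $\Delta(\lambda) = 0$ iff $\lambda = \mu$ or $\lambda = (3L+\mu)/4$, $\Delta(\lambda) < 0$ for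 $\mu < \lambda < (3L+\mu)/4$, and $\Delta(\lambda) > 0$ for $(3L+\mu)/4 < \lambda \leq L$. -/
/-!
Write `s = √(3κ+1)`, so that `3L + μ = s²μ`, `α = 4/(s²μ)` and `β = (s-2)/(s+2)`.
Clearing denominators, `Δ(λ)` is the positive multiple `64/((s+2)² s² μ²)` of
`(s²μ/4 - λ)(μ - λ)`, a quadratic in `λ` with roots `μ` and `(3L+μ)/4`; its sign pattern
on `[μ, L]` is then read off the signs of the two linear factors.
-/

/-- The discriminant of `x² - (1+β)(1-αλ) x + β(1-αλ)`, the characteristic polynomial of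
Nesterov's iteration on the eigendirection of eigenvalue `λ`. -/
def agDiscriminant (α β lam : ℝ) : ℝ :=
  (1 + β) ^ 2 * (1 - α * lam) ^ 2 - 4 * β * (1 - α * lam)

section FastParameters

variable {s μ α β : ℝ} (hs : 0 < s) (hμ : μ ≠ 0) (hα : α = 4 / (s ^ 2 * μ))
  (hβ : β = (s - 2) / (s + 2))
include hs hμ hα hβ

theorem agDiscriminant_eq (lam : ℝ) :
    agDiscriminant α β lam = 16 * (1 - α * lam) / (s + 2) ^ 2 * (1 - lam / μ) := by
  have : s + 2 ≠ 0 := by positivity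
  subst hα hβ
  unfold agDiscriminant
  field_simp
  ring

theorem agDiscriminant_eq_mul_sub_mul_sub (lam : ℝ) :
    agDiscriminant α β lam =
      64 / ((s + 2) ^ 2 * s ^ 2 * μ ^ 2) * (s ^ 2 * μ / 4 - lam) * (μ - lam) := by
  rw [agDiscriminant_eq hs hμ hα hβ, hα]
  field_simp
  ring

theorem agDiscriminant_eq_zero_iff (lam : ℝ) :
    agDiscriminant α β lam = 0 ↔ lam = μ ∨ lam = s ^ 2 * μ / 4 := by
  have hK : 64 / ((s + 2) ^ 2 * s ^ 2 * μ ^ 2) ≠ 0 := by positivity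
  rw [agDiscriminant_eq_mul_sub_mul_sub hs hμ hα hβ, mul_assoc, mul_eq_zero, or_iff_right hK,
    mul_eq_zero, sub_eq_zero, sub_eq_zero, or_comm]
  exact or_congr eq_comm eq_comm

theorem agDiscriminant_neg {lam : ℝ} (hμlam : μ < lam) (hlam : lam < s ^ 2 * μ / 4) :
    agDiscriminant α β lam < 0 := by
  have hK : 0 < 64 / ((s + 2) ^ 2 * s ^ 2 * μ ^ 2) := by positivity
  rw [agDiscriminant_eq_mul_sub_mul_sub hs hμ hα hβ]
  exact mul_neg_of_pos_of_neg (mul_pos hK (by linarith)) (by linarith)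

theorem agDiscriminant_pos {lam : ℝ} (hμlam : μ < lam) (hlam : s ^ 2 * μ / 4 < lam) :
    0 < agDiscriminant α β lam := by
  have hK : 0 < 64 / ((s + 2) ^ 2 * s ^ 2 * μ ^ 2) := by positivity
  rw [agDiscriminant_eq_mul_sub_mul_sub hs hμ hα hβ, mul_assoc]
  exact mul_pos hK (mul_pos_of_neg_of_neg (by linarith) (by linarith))

end FastParameters

/-- Discriminant analysis for Nesterov's AG with the fast parameters
`α = 4/(3L+μ)`, `β = (√(3κ+1)-2)/(√(3κ+1)+2)`, `L = κμ`, `κ > 1`: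
for `λ ∈ [μ, L]`, `Δ(λ) = (1+β)²(1-αλ)² - 4β(1-αλ)` equals
`16(1-αλ)/(√(3κ+1)+2)² · (1 - λ/μ)`; it vanishes iff `λ = μ` or
`λ = (3L+μ)/4`, is negative for `μ < λ < (3L+μ)/4`, and positive for
`(3L+μ)/4 < λ ≤ L`. -/
theorem stmt8 (κ μ L α β : ℝ) (hκ : 1 < κ) (hμ : 0 < μ) (hL : L = κ * μ)
    (hα : α = 4 / (3 * L + μ))
    (hβ : β = (Real.sqrt (3 * κ + 1) - 2) / (Real.sqrt (3 * κ + 1) + 2)) :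
    ∀ lam : ℝ, μ ≤ lam → lam ≤ L →
      ((1 + β) ^ 2 * (1 - α * lam) ^ 2 - 4 * β * (1 - α * lam) =
        16 * (1 - α * lam) / (Real.sqrt (3 * κ + 1) + 2) ^ 2 * (1 - lam / μ)) ∧
      (((1 + β) ^ 2 * (1 - α * lam) ^ 2 - 4 * β * (1 - α * lam) = 0) ↔
        (lam = μ ∨ lam = (3 * L + μ) / 4)) ∧
      (μ < lam → lam < (3 * L + μ) / 4 →
        (1 + β) ^ 2 * (1 - α * lam) ^ 2 - 4 * β * (1 - α * lam) < 0) ∧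
      ((3 * L + μ) / 4 < lam →
        0 < (1 + β) ^ 2 * (1 - α * lam) ^ 2 - 4 * β * (1 - α * lam)) := by
  intro lam hμlam hlamL
  set s := Real.sqrt (3 * κ + 1)
  have hs : 0 < s := Real.sqrt_pos.2 (by linarith)
  have hd : 3 * L + μ = s ^ 2 * μ := by
    rw [Real.sq_sqrt (by linarith), hL]
    ring
  have hα' : α = 4 / (s ^ 2 * μ) := by rw [hα, hd]
  rw [hd]
  exact ⟨agDiscriminant_eq hs hμ.ne' hα' hβ lam,
    agDiscriminant_eq_zero_iff hs hμ.ne' hα' hβ lam,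
    agDiscriminant_neg hs hμ.ne' hα' hβ,
    fun hlam => agDiscriminant_pos hs hμ.ne' hα' hβ (by linarith) hlam⟩
end

section
/- Let $\kappa > 1$, $\mu > 0$, $L = \kappa\mu$, $\alpha = 4/(3L+\mu)$, $\beta = (\sqrt{3\kappa+1}-2)/(\sqrt{3\kappa+1}+2)$, and $\lambda \in (\mu, (3L+\mu)/4)$. Then the two complex conjugate eigenvalues of $T = \begin{pmatrix}(1+\beta)(1-\alpha\lambda) & -\beta(1-\alpha\lambda)\\ 1 & 0\end{pmatrix}$ each have modulus $\sqrt{\beta(1-\alpha\lambda)} \leq 1 - \frac{2}{\sqrt{3\kappa+1}}$. -/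
/-!
Write `s = √(3κ+1)`, so that `β = (s-2)/(s+2)` and `αμ = 4/s²`; the constraint on `λ` says
that `t := 1 - αλ` lies in `(0, 1 - 4/s²)`, where `1 - 4/s² = (s-2)(s+2)/s²` because
`3κ - 3 = (s+2)(s-2)`. At the endpoint `t = 1 - 4/s²` one has exactly `(1+β)²t = 4β` and
`βt = (1 - 2/s)²`, so for `t` inside the interval the characteristic polynomial of `T` has
negative discriminant, its roots are conjugate with modulus `√(βt)`, and `βt < (1 - 2/s)²`.
-/

theorem Complex.norm_eq_sqrt_of_sq_sub_mul_add_eq_zero_s9 {b c : ℝ} (hD : b ^ 2 < 4 * c) {z : ℂ}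
    (hz : z ^ 2 - (b : ℂ) * z + (c : ℂ) = 0) : ‖z‖ = Real.sqrt c := by
  have hre : z.re ^ 2 - z.im ^ 2 - b * z.re + c = 0 := by
    simpa [sq] using congrArg Complex.re hz
  have him : z.im * (2 * z.re - b) = 0 := by
    have := congrArg Complex.im hz
    simp only [sq, Complex.sub_im, Complex.add_im, Complex.mul_im, Complex.ofReal_re,
      Complex.ofReal_im, Complex.zero_im] at this
    linarith
  have hz_re : z.re = b / 2 := by
    rcases mul_eq_zero.mp him with h_real | h_re
    · -- a real root would satisfy `(2 re z - b)² = b² - 4c < 0`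
      nlinarith [sq_nonneg (2 * z.re - b)]
    · linarith
  rw [Complex.norm_def, Complex.normSq_apply, ← sq, ← sq]
  congr 1
  rw [hz_re] at hre ⊢
  linear_combination -hre

section FastParameters

variable {s β t : ℝ}

theorem sq_one_add_mul_lt_four_mul (hs : 2 < s) (hβ : β = (s - 2) / (s + 2)) (ht₀ : 0 < t)
    (ht : t * s ^ 2 < s ^ 2 - 4) : ((1 + β) * t) ^ 2 < 4 * (β * t) := by
  have hβ' : 1 + β = 2 * s / (s + 2) := by rw [hβ]; field_simp; ring
  suffices (1 + β) ^ 2 * t < 4 * β by nlinarith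
  rw [hβ', hβ, div_pow, div_mul_eq_mul_div, div_lt_iff₀ (by positivity)]
  field_simp
  nlinarith

theorem mul_lt_one_sub_two_div_sq (hs : 2 < s) (hβ : β = (s - 2) / (s + 2))
    (ht : t * s ^ 2 < s ^ 2 - 4) : β * t < (1 - 2 / s) ^ 2 := by
  rw [hβ, div_mul_eq_mul_div, div_lt_iff₀ (by positivity)]
  field_simp
  nlinarith

end FastParameters

section StepSize

variable {κ μ L α lam : ℝ}

theorem one_sub_mul_pos (hμ : 0 < μ) (hα : α = 4 / (3 * L + μ)) (h1 : μ < lam)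
    (h2 : lam < (3 * L + μ) / 4) : 0 < 1 - α * lam := by
  rw [hα, sub_pos, div_mul_eq_mul_div, div_lt_one (by linarith)]
  linarith

theorem one_sub_mul_mul_lt (hμ : 0 < μ) (hL : L = κ * μ) (hα : α = 4 / (3 * L + μ))
    (h1 : μ < lam) (h2 : lam < (3 * L + μ) / 4) :
    (1 - α * lam) * (3 * κ + 1) < 3 * κ + 1 - 4 := by
  have hκ : 0 < 3 * κ + 1 := by
    have : 0 < (3 * κ + 1) * μ := by linarith [hL ▸ h2]
    exact pos_of_mul_pos_left this hμ.le
  have hαlam : α * lam * (3 * κ + 1) = 4 * (lam / μ) := by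
    rw [hα, hL]; field_simp
  have : 1 < lam / μ := by rwa [one_lt_div hμ]
  linarith

end StepSize

/-- For Nesterov's AG with the fast parameters and `λ ∈ (μ, (3L+μ)/4)`, every
(complex) eigenvalue of `T = [[(1+β)(1-αλ), -β(1-αλ)],[1,0]]`, i.e. every root
of `x² - (1+β)(1-αλ)x + β(1-αλ) = 0`, has modulus `√(β(1-αλ))`, which is at
most `1 - 2/√(3κ+1)`. -/
theorem stmt9 (κ μ L α β lam : ℝ) (hκ : 1 < κ) (hμ : 0 < μ) (hL : L = κ * μ)
    (hα : α = 4 / (3 * L + μ))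
    (hβ : β = (Real.sqrt (3 * κ + 1) - 2) / (Real.sqrt (3 * κ + 1) + 2))
    (h1 : μ < lam) (h2 : lam < (3 * L + μ) / 4) :
    (∀ z : ℂ, z ^ 2 - (((1 + β) * (1 - α * lam) : ℝ) : ℂ) * z +
        ((β * (1 - α * lam) : ℝ) : ℂ) = 0 →
      ‖z‖ = Real.sqrt (β * (1 - α * lam))) ∧
    Real.sqrt (β * (1 - α * lam)) ≤ 1 - 2 / Real.sqrt (3 * κ + 1) := by
  set s := Real.sqrt (3 * κ + 1)
  have hs_sq : s ^ 2 = 3 * κ + 1 := Real.sq_sqrt (by linarith)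
  have hs : 2 < s := (Real.lt_sqrt zero_le_two).mpr (by linarith)
  have ht₀ : 0 < 1 - α * lam := one_sub_mul_pos hμ hα h1 h2
  have ht : (1 - α * lam) * s ^ 2 < s ^ 2 - 4 := hs_sq ▸ one_sub_mul_mul_lt hμ hL hα h1 h2
  refine ⟨fun z hz ↦ Complex.norm_eq_sqrt_of_sq_sub_mul_add_eq_zero_s9
    (sq_one_add_mul_lt_four_mul hs hβ ht₀ ht) hz, ?_⟩
  have h2s : 0 ≤ 1 - 2 / s := by
    rw [sub_nonneg, div_le_one (by linarith)]
    exact hs.le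
  exact (Real.sqrt_le_left h2s).mpr (mul_lt_one_sub_two_div_sq hs hβ ht).le
end
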